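/- Twisted 2-cocycle compatibility under partial gauge transformation: with the notation and hypotheses of the previous statement (descent datum (x,g,a), partial gauge transformation (f,c) to (x',g'), and a' defined by a' := Ad(f_{(0)})(c_{(0,2)}⁻¹ ∘ a ∘ Ad(g_{(0,1)}⁻¹)(c_{(1,2)}) ∘ c_{(0,1)})), the triple (x',g',a') satisfies the twisted 2-cocycle condition: (a'_{(0,1,3)})⁻¹ ∘ a'_{(0,2,3)} ∘ a'_{(0,1,2)} = Ad((g'_{(0,1)})⁻¹)(a'_{(1,2,3)}) in G³₂(x'_{(0)}). -/

import Mathlib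

/-! Crossed groupoids (= crossed modules over groupoids), following Yekutieli,
"Combinatorial descent data for gerbes". -/

structure CrossedGroupoid : Type 1 where
  Obj : Type
  Hom : Obj → Obj → Type
  id : ∀ x, Hom x x
  comp : ∀ {x y z}, Hom y z → Hom x y → Hom x z
  inv : ∀ {x y}, Hom x y → Hom y x
  comp_assoc : ∀ {x y z w} (h : Hom z w) (g : Hom y z) (f : Hom x y),
    comp (comp h g) f = comp h (comp g f)
  id_comp : ∀ {x y} (f : Hom x y), comp (id y) f = f
  comp_id : ∀ {x y} (f : Hom x y), comp f (id x) = f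
  inv_comp : ∀ {x y} (f : Hom x y), comp (inv f) f = id x
  comp_inv : ∀ {x y} (f : Hom x y), comp f (inv f) = id y
  -- the totally disconnected groupoid 𝒢₂, i.e. a family of groups
  G2 : Obj → Type
  mul : ∀ {x}, G2 x → G2 x → G2 x
  one : ∀ x, G2 x
  inv2 : ∀ {x}, G2 x → G2 x
  mul_assoc : ∀ {x} (a b c : G2 x), mul (mul a b) c = mul a (mul b c)
  one_mul : ∀ {x} (a : G2 x), mul (one x) a = a
  mul_one : ∀ {x} (a : G2 x), mul a (one x) = a
  inv2_mul : ∀ {x} (a : G2 x), mul (inv2 a) a = one x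
  -- the twisting: an action of 𝒢₁ on 𝒢₂
  Ad : ∀ {x y}, Hom x y → G2 x → G2 y
  Ad_mul : ∀ {x y} (g : Hom x y) (a b : G2 x), Ad g (mul a b) = mul (Ad g a) (Ad g b)
  Ad_one : ∀ {x y} (g : Hom x y), Ad g (one x) = one y
  Ad_id : ∀ {x} (a : G2 x), Ad (id x) a = a
  Ad_comp : ∀ {x y z} (h : Hom y z) (g : Hom x y) (a : G2 x),
    Ad (comp h g) a = Ad h (Ad g a)
  -- the feedback D : 𝒢₂ → 𝒢₁, identity on objects
  D : ∀ {x}, G2 x → Hom x x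
  D_mul : ∀ {x} (a b : G2 x), D (mul a b) = comp (D a) (D b)
  D_one : ∀ x, D (one x) = id x
  -- equivariance of the feedback
  D_Ad : ∀ {x y} (g : Hom x y) (a : G2 x), D (Ad g a) = comp (comp g (D a)) (inv g)
  -- Peiffer condition
  peiffer : ∀ {x} (a b : G2 x), Ad (D a) b = mul (mul a b) (inv2 a)

namespace CrossedGroupoid

/-- Transport of 1-morphisms along equalities of objects. -/
def hcast (G : CrossedGroupoid) {x x' y y' : G.Obj} (ex : x = x') (ey : y = y')
    (f : G.Hom x y) : G.Hom x' y' := ey ▸ ex ▸ f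

/-- Transport of 2-morphisms along an equality of objects. -/
def cast2 (G : CrossedGroupoid) {x x' : G.Obj} (e : x = x') (a : G.G2 x) : G.G2 x' := e ▸ a

/-- The relation "isomorphic in 𝒢₁". -/
def pi0Rel (G : CrossedGroupoid) : G.Obj → G.Obj → Prop := fun x y => Nonempty (G.Hom x y)

/-- π₀ of a crossed groupoid: isomorphism classes of objects of 𝒢₁. -/
def pi0 (G : CrossedGroupoid) : Type := Quot G.pi0Rel

/-- The right action relation on a hom-set: g' = g ∘ D(a). -/
def homRel (G : CrossedGroupoid) (x x' : G.Obj) : G.Hom x x' → G.Hom x x' → Prop :=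
  fun g g' => ∃ a : G.G2 x, g' = G.comp g (G.D a)

/-- π₁(G, x, x') := 𝒢₁(x,x') / 𝒢₂(x). -/
def pi1' (G : CrossedGroupoid) (x x' : G.Obj) : Type := Quot (G.homRel x x')

/-- π₁(G, x) = Coker(D : 𝒢₂(x) → 𝒢₁(x)) as a quotient set. -/
def pi1 (G : CrossedGroupoid) (x : G.Obj) : Type := G.pi1' x x

/-- π₂(G, x) = Ker(D : 𝒢₂(x) → 𝒢₁(x)). -/
def pi2 (G : CrossedGroupoid) (x : G.Obj) : Type := {a : G.G2 x // G.D a = G.id x}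

end CrossedGroupoid

/-- A morphism of crossed groupoids. -/
structure CrossedGroupoidHom (G H : CrossedGroupoid) where
  obj : G.Obj → H.Obj
  map1 : ∀ {x y : G.Obj}, G.Hom x y → H.Hom (obj x) (obj y)
  map2 : ∀ {x : G.Obj}, G.G2 x → H.G2 (obj x)
  map1_comp : ∀ {x y z : G.Obj} (g : G.Hom y z) (f : G.Hom x y),
    map1 (G.comp g f) = H.comp (map1 g) (map1 f)
  map1_id : ∀ x : G.Obj, map1 (G.id x) = H.id (obj x)
  map2_mul : ∀ {x : G.Obj} (a b : G.G2 x), map2 (G.mul a b) = H.mul (map2 a) (map2 b)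
  map_D : ∀ {x : G.Obj} (a : G.G2 x), map1 (G.D a) = H.D (map2 a)
  map_Ad : ∀ {x y : G.Obj} (g : G.Hom x y) (a : G.G2 x),
    map2 (G.Ad g a) = H.Ad (map1 g) (map2 a)

namespace CrossedGroupoidHom

/-- Identity morphism of crossed groupoids. -/
def id (G : CrossedGroupoid) : CrossedGroupoidHom G G where
  obj := fun x => x
  map1 := fun f => f
  map2 := fun a => a
  map1_comp := fun _ _ => rfl
  map1_id := fun _ => rfl
  map2_mul := fun _ _ => rfl
  map_D := fun _ => rfl
  map_Ad := fun _ _ => rfl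

/-- Composition of morphisms of crossed groupoids. -/
def comp {G H K : CrossedGroupoid} (F₂ : CrossedGroupoidHom H K) (F₁ : CrossedGroupoidHom G H) :
    CrossedGroupoidHom G K where
  obj := fun x => F₂.obj (F₁.obj x)
  map1 := fun f => F₂.map1 (F₁.map1 f)
  map2 := fun a => F₂.map2 (F₁.map2 a)
  map1_comp := fun g f => by (try dsimp only); rw [F₁.map1_comp, F₂.map1_comp]
  map1_id := fun x => by (try dsimp only); rw [F₁.map1_id, F₂.map1_id]
  map2_mul := fun a b => by (try dsimp only); rw [F₁.map2_mul, F₂.map2_mul]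
  map_D := fun a => by (try dsimp only); rw [F₁.map_D, F₂.map_D]
  map_Ad := fun g a => by (try dsimp only); rw [F₁.map_Ad, F₂.map_Ad]

variable {G H : CrossedGroupoid}

/-- The induced map on π₀. -/
def pi0map (F : CrossedGroupoidHom G H) : G.pi0 → H.pi0 :=
  Quot.map F.obj (fun _ _ h => ⟨F.map1 h.some⟩)

/-- The induced map on π₁(−, x, x'). -/
def pi1'map (F : CrossedGroupoidHom G H) (x x' : G.Obj) :
    G.pi1' x x' → H.pi1' (F.obj x) (F.obj x') :=
  Quot.map F.map1 (by
    rintro g g' ⟨a, rfl⟩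
    exact ⟨F.map2 a, by rw [F.map1_comp, F.map_D]⟩)

/-- The induced map on π₁(−, x). -/
def pi1map (F : CrossedGroupoidHom G H) (x : G.Obj) : G.pi1 x → H.pi1 (F.obj x) :=
  F.pi1'map x x

/-- The induced map on π₂(−, x). -/
def pi2map (F : CrossedGroupoidHom G H) (x : G.Obj) : G.pi2 x → H.pi2 (F.obj x) :=
  fun a => ⟨F.map2 a.1, by rw [← F.map_D, a.2, F.map1_id]⟩

/-- A weak equivalence of crossed groupoids: bijective on π₀, π₁ and π₂. -/
def IsWeakEquiv (F : CrossedGroupoidHom G H) : Prop :=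
  Function.Bijective F.pi0map ∧ (∀ x, Function.Bijective (F.pi1map x)) ∧
    (∀ x, Function.Bijective (F.pi2map x))

end CrossedGroupoidHom

/-! ### Combinatorics of the simplex category -/

/-- The vertex (i) of Δ^q, as a monotone map Δ⁰ → Δ^q. -/
def vtxMap {q : ℕ} (i : Fin (q + 1)) : Fin 1 →o Fin (q + 1) :=
  ⟨fun _ => i, fun _ _ _ => le_rfl⟩

/-- The edge (i,j) of Δ^q, as a monotone map Δ¹ → Δ^q. -/
def edgeMap {q : ℕ} (i j : Fin (q + 1)) (h : i ≤ j) : Fin 2 →o Fin (q + 1) :=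
  ⟨fun k => if (k : ℕ) = 0 then i else j, by
    intro a b hab
    have hab' : (a : ℕ) ≤ (b : ℕ) := hab
    show (if (a : ℕ) = 0 then i else j) ≤ (if (b : ℕ) = 0 then i else j)
    by_cases ha : (a : ℕ) = 0
    · by_cases hb : (b : ℕ) = 0
      · rw [if_pos ha, if_pos hb]
      · rw [if_pos ha, if_neg hb]; exact h
    · have hb : ¬ (b : ℕ) = 0 := fun hb0 => ha (Nat.le_zero.mp (hb0 ▸ hab'))
      rw [if_neg ha, if_neg hb]⟩

/-- The triangle (i,j,k) of Δ^q, as a monotone map Δ² → Δ^q. -/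
def triMap {q : ℕ} (i j k : Fin (q + 1)) (hij : i ≤ j) (hjk : j ≤ k) :
    Fin 3 →o Fin (q + 1) :=
  ⟨fun m => if (m : ℕ) = 0 then i else if (m : ℕ) = 1 then j else k, by
    intro a b hab
    have hab' : (a : ℕ) ≤ (b : ℕ) := hab
    show (if (a : ℕ) = 0 then i else if (a : ℕ) = 1 then j else k) ≤
      (if (b : ℕ) = 0 then i else if (b : ℕ) = 1 then j else k)
    by_cases ha0 : (a : ℕ) = 0
    · by_cases hb0 : (b : ℕ) = 0
      · rw [if_pos ha0, if_pos hb0]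
      · by_cases hb1 : (b : ℕ) = 1
        · rw [if_pos ha0, if_neg hb0, if_pos hb1]; exact hij
        · rw [if_pos ha0, if_neg hb0, if_neg hb1]; exact hij.trans hjk
    · by_cases ha1 : (a : ℕ) = 1
      · have hb0 : ¬ (b : ℕ) = 0 := by omega
        by_cases hb1 : (b : ℕ) = 1
        · rw [if_neg ha0, if_pos ha1, if_neg hb0, if_pos hb1]
        · rw [if_neg ha0, if_pos ha1, if_neg hb0, if_neg hb1]; exact hjk
      · have hb0 : ¬ (b : ℕ) = 0 := by omega
        have hb1 : ¬ (b : ℕ) = 1 := by omega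
        rw [if_neg ha0, if_neg ha1, if_neg hb0, if_neg hb1]⟩

theorem comp_vtxMap {p q : ℕ} (α : Fin (p + 1) →o Fin (q + 1)) (i : Fin (p + 1)) :
    α.comp (vtxMap i) = vtxMap (α i) := rfl

/-! ### Cosimplicial crossed groupoids -/

/-- A cosimplicial crossed groupoid: a functor Δ → CrGrpd. -/
structure CosimplicialCrossedGroupoid : Type 1 where
  obj : ℕ → CrossedGroupoid
  map : ∀ {p q : ℕ}, (Fin (p + 1) →o Fin (q + 1)) → CrossedGroupoidHom (obj p) (obj q)
  map_id : ∀ p, map (OrderHom.id : Fin (p + 1) →o Fin (p + 1)) = CrossedGroupoidHom.id (obj p)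
  map_comp : ∀ {p q r : ℕ} (β : Fin (q + 1) →o Fin (r + 1)) (α : Fin (p + 1) →o Fin (q + 1)),
    map (β.comp α) = (map β).comp (map α)

namespace CosimplicialCrossedGroupoid

variable (G : CosimplicialCrossedGroupoid)

theorem obj_comp {p q r : ℕ} (β : Fin (q + 1) →o Fin (r + 1)) (α : Fin (p + 1) →o Fin (q + 1))
    (x : (G.obj p).Obj) :
    (G.map β).obj ((G.map α).obj x) = (G.map (β.comp α)).obj x := by
  rw [G.map_comp]; rfl

/-- The object x of G⁰ pushed to the vertex (i) of Δ^q. -/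
def X (x : (G.obj 0).Obj) (q : ℕ) (i : Fin (q + 1)) : (G.obj q).Obj :=
  (G.map (vtxMap i)).obj x

theorem X_push (x : (G.obj 0).Obj) {p q : ℕ} (α : Fin (p + 1) →o Fin (q + 1))
    (i : Fin (p + 1)) : (G.map α).obj (G.X x p i) = G.X x q (α i) := by
  unfold X
  rw [obj_comp, comp_vtxMap]

/-- Pushing a 1-morphism between vertex objects along α. -/
def push1 {x : (G.obj 0).Obj} {p q : ℕ} (α : Fin (p + 1) →o Fin (q + 1))
    {i j : Fin (p + 1)} (g : (G.obj p).Hom (G.X x p i) (G.X x p j)) :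
    (G.obj q).Hom (G.X x q (α i)) (G.X x q (α j)) :=
  (G.obj q).hcast (G.X_push x α i) (G.X_push x α j) ((G.map α).map1 g)

/-- Pushing a 2-morphism at a vertex object along α. -/
def push2 {x : (G.obj 0).Obj} {p q : ℕ} (α : Fin (p + 1) →o Fin (q + 1))
    {i : Fin (p + 1)} (a : (G.obj p).G2 (G.X x p i)) :
    (G.obj q).G2 (G.X x q (α i)) :=
  (G.obj q).cast2 (G.X_push x α i) ((G.map α).map2 a)

/-- Yekutieli's combinatorial descent conditions (Definition 1.5):
the failure-of-1-cocycle condition and the twisted 2-cocycle condition. -/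
def IsDescent (x : (G.obj 0).Obj)
    (g : (G.obj 1).Hom (G.X x 1 0) (G.X x 1 1))
    (a : (G.obj 2).G2 (G.X x 2 0)) : Prop :=
  ((G.obj 2).comp ((G.obj 2).comp ((G.obj 2).inv (G.push1 (edgeMap 0 2 (by decide)) g))
      (G.push1 (edgeMap 1 2 (by decide)) g)) (G.push1 (edgeMap 0 1 (by decide)) g)
    = (G.obj 2).D a)
  ∧
  ((G.obj 3).mul ((G.obj 3).mul
        ((G.obj 3).inv2 (G.push2 (triMap 0 1 3 (by decide) (by decide)) a))
        (G.push2 (triMap 0 2 3 (by decide) (by decide)) a))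
      (G.push2 (triMap 0 1 2 (by decide) (by decide)) a)
    = (G.obj 3).Ad ((G.obj 3).inv (G.push1 (edgeMap 0 1 (by decide)) g))
        (G.push2 (triMap 1 2 3 (by decide) (by decide)) a))

/-- A combinatorial descent datum (Definition 1.5). -/
structure Desc (G : CosimplicialCrossedGroupoid) where
  x : (G.obj 0).Obj
  g : (G.obj 1).Hom (G.X x 1 0) (G.X x 1 1)
  a : (G.obj 2).G2 (G.X x 2 0)
  isDescent : G.IsDescent x g a

/-- The Yekutieli gauge-transformation conditions (Definition 1.7) for a pair (f, c). -/
def IsGauge (x : (G.obj 0).Obj) (g : (G.obj 1).Hom (G.X x 1 0) (G.X x 1 1))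
    (a : (G.obj 2).G2 (G.X x 2 0))
    (x' : (G.obj 0).Obj) (g' : (G.obj 1).Hom (G.X x' 1 0) (G.X x' 1 1))
    (a' : (G.obj 2).G2 (G.X x' 2 0))
    (f : (G.obj 0).Hom x x') (c : (G.obj 1).G2 (G.X x 1 0)) : Prop :=
  (g' = (G.obj 1).comp ((G.obj 1).comp ((G.obj 1).comp
      ((G.map (vtxMap (1 : Fin 2))).map1 f) g) ((G.obj 1).D c))
      ((G.obj 1).inv ((G.map (vtxMap (0 : Fin 2))).map1 f)))
  ∧
  (a' = (G.obj 2).Ad ((G.map (vtxMap (0 : Fin 3))).map1 f)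
    ((G.obj 2).mul ((G.obj 2).mul ((G.obj 2).mul
        ((G.obj 2).inv2 (G.push2 (edgeMap 0 2 (by decide)) c)) a)
        ((G.obj 2).Ad ((G.obj 2).inv (G.push1 (edgeMap 0 1 (by decide)) g))
          (G.push2 (edgeMap 1 2 (by decide)) c)))
      (G.push2 (edgeMap 0 1 (by decide)) c)))

/-- Gauge equivalence of descent data. -/
def GaugeEquiv (P Q : G.Desc) : Prop :=
  ∃ (f : (G.obj 0).Hom P.x Q.x) (c : (G.obj 1).G2 (G.X P.x 1 0)),
    G.IsGauge P.x P.g P.a Q.x Q.g Q.a f c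

/-- The explicit formula for the transported 2-morphism a'
(Definition 1.7(ii) / Lemma 1.9). -/
def transportA {x x' : (G.obj 0).Obj} (f : (G.obj 0).Hom x x')
    (g : (G.obj 1).Hom (G.X x 1 0) (G.X x 1 1))
    (a : (G.obj 2).G2 (G.X x 2 0)) (c : (G.obj 1).G2 (G.X x 1 0)) :
    (G.obj 2).G2 (G.X x' 2 0) :=
  (G.obj 2).Ad ((G.map (vtxMap (0 : Fin 3))).map1 f)
    ((G.obj 2).mul ((G.obj 2).mul ((G.obj 2).mul
        ((G.obj 2).inv2 (G.push2 (edgeMap 0 2 (by decide)) c)) a)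
        ((G.obj 2).Ad ((G.obj 2).inv (G.push1 (edgeMap 0 1 (by decide)) g))
          (G.push2 (edgeMap 1 2 (by decide)) c)))
      (G.push2 (edgeMap 0 1 (by decide)) c))

end CosimplicialCrossedGroupoid

/-- A morphism of cosimplicial crossed groupoids. -/
structure CosimplicialMor (G H : CosimplicialCrossedGroupoid) where
  app : ∀ p, CrossedGroupoidHom (G.obj p) (H.obj p)
  naturality : ∀ {p q : ℕ} (α : Fin (p + 1) →o Fin (q + 1)),
    (app q).comp (G.map α) = (H.map α).comp (app p)

namespace CosimplicialMor

variable {G H : CosimplicialCrossedGroupoid}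

theorem app_X (F : CosimplicialMor G H) (x : (G.obj 0).Obj) (q : ℕ) (i : Fin (q + 1)) :
    (F.app q).obj (G.X x q i) = H.X ((F.app 0).obj x) q i :=
  congrFun (congrArg CrossedGroupoidHom.obj (F.naturality (vtxMap i))) x

/-- Image of an object of G⁰. -/
def objD (F : CosimplicialMor G H) (x : (G.obj 0).Obj) : (H.obj 0).Obj := (F.app 0).obj x

/-- Image of a 1-morphism in dimension 0. -/
def mapF (F : CosimplicialMor G H) {x x' : (G.obj 0).Obj} (f : (G.obj 0).Hom x x') :
    (H.obj 0).Hom (F.objD x) (F.objD x') := (F.app 0).map1 f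

/-- Image of the 1-morphism part of a descent datum. -/
def mapG (F : CosimplicialMor G H) {x : (G.obj 0).Obj}
    (g : (G.obj 1).Hom (G.X x 1 0) (G.X x 1 1)) :
    (H.obj 1).Hom (H.X (F.objD x) 1 0) (H.X (F.objD x) 1 1) :=
  (H.obj 1).hcast (F.app_X x 1 0) (F.app_X x 1 1) ((F.app 1).map1 g)

/-- Image of the 2-morphism part of a descent datum. -/
def mapA (F : CosimplicialMor G H) {x : (G.obj 0).Obj} (a : (G.obj 2).G2 (G.X x 2 0)) :
    (H.obj 2).G2 (H.X (F.objD x) 2 0) :=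
  (H.obj 2).cast2 (F.app_X x 2 0) ((F.app 2).map2 a)

/-- Image of the 2-morphism part of a gauge transformation. -/
def mapC (F : CosimplicialMor G H) {x : (G.obj 0).Obj} (c : (G.obj 1).G2 (G.X x 1 0)) :
    (H.obj 1).G2 (H.X (F.objD x) 1 0) :=
  (H.obj 1).cast2 (F.app_X x 1 0) ((F.app 1).map2 c)

/-- A weak equivalence of cosimplicial crossed groupoids. -/
def IsWeakEquiv (F : CosimplicialMor G H) : Prop := ∀ p, (F.app p).IsWeakEquiv

end CosimplicialMor

/-! Pushing the descent and gauge relations forward along the faces of `Δ³` reduces the claim to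
a computation in the single crossed groupoid `G³`. There, the failure of the 1-cocycle condition,
`g₀₂⁻¹ ∘ g₁₂ ∘ g₀₁ = D(a₀₁₂)`, together with the Peiffer identity says that `Ad(g₀₁⁻¹) ∘ Ad(g₁₂⁻¹)`
and `Ad(g₀₂⁻¹)` differ by conjugation with `a₀₁₂`; this moves the `c₂₃` term past `a₀₁₂`, and the
twisted 2-cocycle condition for `a` then makes both sides agree in the group `G³₂(x_{(0)})`. -/

namespace CrossedGroupoid

variable {K : CrossedGroupoid}

instance (x : K.Obj) : Group (K.G2 x) where
  mul := K.mul
  one := K.one x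
  inv := K.inv2
  mul_assoc := K.mul_assoc
  one_mul := K.one_mul
  mul_one := K.mul_one
  inv_mul_cancel := K.inv2_mul

theorem Ad_mul' {x y : K.Obj} (g : K.Hom x y) (a b : K.G2 x) :
    K.Ad g (a * b) = K.Ad g a * K.Ad g b :=
  K.Ad_mul g a b

theorem Ad_inv2 {x y : K.Obj} (g : K.Hom x y) (a : K.G2 x) :
    K.Ad g a⁻¹ = (K.Ad g a)⁻¹ :=
  map_inv (MonoidHom.mk' (K.Ad g) (K.Ad_mul g)) a

theorem eq_inv_of_comp_eq_id {x y : K.Obj} {f : K.Hom x y} {h : K.Hom y x}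
    (hf : K.comp h f = K.id x) : h = K.inv f := by
  rw [← K.comp_id h, ← K.comp_inv f, ← K.comp_assoc, hf, K.id_comp]

theorem inv_comp_rev {x y z : K.Obj} (g : K.Hom y z) (f : K.Hom x y) :
    K.inv (K.comp g f) = K.comp (K.inv f) (K.inv g) := by
  refine (eq_inv_of_comp_eq_id ?_).symm
  rw [K.comp_assoc, ← K.comp_assoc (K.inv g), K.inv_comp, K.id_comp, K.inv_comp]

theorem inv_inv_hom {x y : K.Obj} (f : K.Hom x y) : K.inv (K.inv f) = f :=
  (eq_inv_of_comp_eq_id (K.comp_inv f)).symm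

theorem D_inv2 {x : K.Obj} (a : K.G2 x) : K.D a⁻¹ = K.inv (K.D a) :=
  eq_inv_of_comp_eq_id <| by
    rw [← K.D_mul]; exact (congrArg K.D (inv_mul_cancel a)).trans (K.D_one x)

theorem Ad_inv_D {x : K.Obj} (a b : K.G2 x) : K.Ad (K.inv (K.D a)) b = a⁻¹ * b * a :=
  calc K.Ad (K.inv (K.D a)) b = K.Ad (K.D a⁻¹) b := by rw [D_inv2]
    _ = a⁻¹ * b * a⁻¹⁻¹ := K.peiffer _ _
    _ = a⁻¹ * b * a := by rw [inv_inv]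

theorem Ad_inv_Ad_inv_of_comp_eq_D {v₀ v₁ v₂ : K.Obj} {g₀₁ : K.Hom v₀ v₁}
    {g₀₂ : K.Hom v₀ v₂} {g₁₂ : K.Hom v₁ v₂} {A : K.G2 v₀}
    (h : K.comp (K.comp (K.inv g₀₂) g₁₂) g₀₁ = K.D A) (b : K.G2 v₂) :
    K.Ad (K.inv g₀₁) (K.Ad (K.inv g₁₂) b) = A⁻¹ * K.Ad (K.inv g₀₂) b * A := by
  have hinv : K.comp (K.inv g₀₁) (K.inv g₁₂) = K.comp (K.inv (K.D A)) (K.inv g₀₂) := by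
    rw [← h, inv_comp_rev, inv_comp_rev, inv_inv_hom, K.comp_assoc, K.comp_assoc, K.comp_inv,
      K.comp_id]
  rw [← K.Ad_comp, hinv, K.Ad_comp, Ad_inv_D]

theorem Ad_inv_gauge {v₀ v₁ w₀ w₁ : K.Obj} (f₀ : K.Hom v₀ w₀) (f₁ : K.Hom v₁ w₁)
    (g : K.Hom v₀ v₁) (c : K.G2 v₀) (b : K.G2 v₁) :
    K.Ad (K.inv (K.comp (K.comp (K.comp f₁ g) (K.D c)) (K.inv f₀))) (K.Ad f₁ b)
      = K.Ad f₀ (c⁻¹ * K.Ad (K.inv g) b * c) := by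
  rw [inv_comp_rev, inv_comp_rev, inv_comp_rev, inv_inv_hom, K.Ad_comp, K.Ad_comp, K.Ad_comp,
    ← K.Ad_comp (K.inv f₁), K.inv_comp, K.Ad_id, Ad_inv_D]

theorem twisted_cocycle_of_gauge {v₀ v₁ v₂ w₀ w₁ : K.Obj}
    (f₀ : K.Hom v₀ w₀) (f₁ : K.Hom v₁ w₁)
    {g₀₁ : K.Hom v₀ v₁} {g₀₂ : K.Hom v₀ v₂} {g₁₂ : K.Hom v₁ v₂}
    {A₀₁₂ A₀₁₃ A₀₂₃ : K.G2 v₀} {A₁₂₃ : K.G2 v₁}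
    (c₀₁ c₀₂ c₀₃ : K.G2 v₀) (c₁₂ c₁₃ : K.G2 v₁) (c₂₃ : K.G2 v₂)
    (h₁ : K.comp (K.comp (K.inv g₀₂) g₁₂) g₀₁ = K.D A₀₁₂)
    (h₂ : A₀₁₃⁻¹ * A₀₂₃ * A₀₁₂ = K.Ad (K.inv g₀₁) A₁₂₃) :
    (K.Ad f₀ (c₀₃⁻¹ * A₀₁₃ * K.Ad (K.inv g₀₁) c₁₃ * c₀₁))⁻¹
        * K.Ad f₀ (c₀₃⁻¹ * A₀₂₃ * K.Ad (K.inv g₀₂) c₂₃ * c₀₂)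
        * K.Ad f₀ (c₀₂⁻¹ * A₀₁₂ * K.Ad (K.inv g₀₁) c₁₂ * c₀₁)
      = K.Ad (K.inv (K.comp (K.comp (K.comp f₁ g₀₁) (K.D c₀₁)) (K.inv f₀)))
          (K.Ad f₁ (c₁₃⁻¹ * A₁₂₃ * K.Ad (K.inv g₁₂) c₂₃ * c₁₂)) := by
  rw [Ad_inv_gauge, ← Ad_inv2, ← Ad_mul', ← Ad_mul']
  congr 1
  simp only [Ad_mul', Ad_inv2]
  rw [← h₂, Ad_inv_Ad_inv_of_comp_eq_D h₁]
  group

theorem hcast_heq {x x' y y' : K.Obj} (ex : x = x') (ey : y = y') (f : K.Hom x y) :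
    HEq (K.hcast ex ey f) f := by
  subst ex ey; rfl

theorem cast2_heq {x x' : K.Obj} (e : x = x') (a : K.G2 x) : HEq (K.cast2 e a) a := by
  subst e; rfl

theorem cast2_mul {x x' : K.Obj} (e : x = x') (a b : K.G2 x) :
    K.cast2 e (K.mul a b) = K.mul (K.cast2 e a) (K.cast2 e b) := by
  subst e; rfl

theorem cast2_inv2 {x x' : K.Obj} (e : x = x') (a : K.G2 x) :
    K.cast2 e (K.inv2 a) = K.inv2 (K.cast2 e a) := by
  subst e; rfl

theorem hcast_comp {x x' y y' z z' : K.Obj} (ex : x = x') (ey : y = y') (ez : z = z')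
    (g : K.Hom y z) (f : K.Hom x y) :
    K.hcast ex ez (K.comp g f) = K.comp (K.hcast ey ez g) (K.hcast ex ey f) := by
  subst ex ey ez; rfl

theorem hcast_inv {x x' y y' : K.Obj} (ex : x = x') (ey : y = y') (f : K.Hom x y) :
    K.hcast ey ex (K.inv f) = K.inv (K.hcast ex ey f) := by
  subst ex ey; rfl

theorem hcast_D {x x' : K.Obj} (e : x = x') (a : K.G2 x) :
    K.hcast e e (K.D a) = K.D (K.cast2 e a) := by
  subst e; rfl

theorem cast2_Ad {x x' y y' : K.Obj} (ex : x = x') (ey : y = y') (g : K.Hom x y)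
    (a : K.G2 x) : K.cast2 ey (K.Ad g a) = K.Ad (K.hcast ex ey g) (K.cast2 ex a) := by
  subst ex ey; rfl

end CrossedGroupoid

namespace CrossedGroupoidHom

variable {G H : CrossedGroupoid}

theorem map2_inv2 (F : CrossedGroupoidHom G H) {x : G.Obj} (a : G.G2 x) :
    F.map2 (G.inv2 a) = H.inv2 (F.map2 a) :=
  map_inv (MonoidHom.mk' F.map2 F.map2_mul) a

theorem map1_inv (F : CrossedGroupoidHom G H) {x y : G.Obj} (f : G.Hom x y) :
    F.map1 (G.inv f) = H.inv (F.map1 f) :=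
  CrossedGroupoid.eq_inv_of_comp_eq_id (by rw [← F.map1_comp, G.inv_comp, F.map1_id])

theorem map1_heq_of_eq {F F' : CrossedGroupoidHom G H} (h : F = F') {x y : G.Obj}
    (f : G.Hom x y) : HEq (F.map1 f) (F'.map1 f) := by
  subst h; rfl

theorem map2_heq_of_eq {F F' : CrossedGroupoidHom G H} (h : F = F') {x : G.Obj}
    (a : G.G2 x) : HEq (F.map2 a) (F'.map2 a) := by
  subst h; rfl

theorem map1_congr_heq (F : CrossedGroupoidHom G H) {x x' y y' : G.Obj} (ex : x = x')
    (ey : y = y') {f : G.Hom x y} {f' : G.Hom x' y'} (h : HEq f f') :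
    HEq (F.map1 f) (F.map1 f') := by
  subst ex ey; rw [eq_of_heq h]

theorem map2_congr_heq (F : CrossedGroupoidHom G H) {x x' : G.Obj} (e : x = x')
    {a : G.G2 x} {a' : G.G2 x'} (h : HEq a a') : HEq (F.map2 a) (F.map2 a') := by
  subst e; rw [eq_of_heq h]

end CrossedGroupoidHom

theorem comp_edgeMap {p q : ℕ} (α : Fin (p + 1) →o Fin (q + 1)) (i j : Fin (p + 1))
    (h : i ≤ j) : α.comp (edgeMap i j h) = edgeMap (α i) (α j) (α.monotone h) := by
  refine OrderHom.ext _ _ (funext fun k => ?_)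
  exact apply_ite α _ i j

namespace CosimplicialCrossedGroupoid

variable (G : CosimplicialCrossedGroupoid)

/-- Like `push1`, but source and target may lie over different objects of `G⁰`, as do the
vertex components of a morphism `f : x ⟶ x'` of `G⁰`. -/
def push1g {x₁ x₂ : (G.obj 0).Obj} {p q : ℕ} (α : Fin (p + 1) →o Fin (q + 1))
    {i j : Fin (p + 1)} (g : (G.obj p).Hom (G.X x₁ p i) (G.X x₂ p j)) :
    (G.obj q).Hom (G.X x₁ q (α i)) (G.X x₂ q (α j)) :=
  (G.obj q).hcast (G.X_push x₁ α i) (G.X_push x₂ α j) ((G.map α).map1 g)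

variable {G} {x x₁ x₂ x₃ : (G.obj 0).Obj} {p q r : ℕ}

theorem push1_eq_push1g (α : Fin (p + 1) →o Fin (q + 1)) {i j : Fin (p + 1)}
    (g : (G.obj p).Hom (G.X x p i) (G.X x p j)) : G.push1 α g = G.push1g α g := rfl

theorem push1g_comp (α : Fin (p + 1) →o Fin (q + 1)) {i j k : Fin (p + 1)}
    (g : (G.obj p).Hom (G.X x₂ p j) (G.X x₃ p k))
    (f : (G.obj p).Hom (G.X x₁ p i) (G.X x₂ p j)) :
    G.push1g α ((G.obj p).comp g f) = (G.obj q).comp (G.push1g α g) (G.push1g α f) := by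
  rw [push1g, (G.map α).map1_comp, CrossedGroupoid.hcast_comp _ (G.X_push x₂ α j)]
  rfl

theorem push1g_inv (α : Fin (p + 1) →o Fin (q + 1)) {i j : Fin (p + 1)}
    (f : (G.obj p).Hom (G.X x₁ p i) (G.X x₂ p j)) :
    G.push1g α ((G.obj p).inv f) = (G.obj q).inv (G.push1g α f) := by
  rw [push1g, (G.map α).map1_inv, CrossedGroupoid.hcast_inv]
  rfl

theorem push1g_D (α : Fin (p + 1) →o Fin (q + 1)) {i : Fin (p + 1)}
    (a : (G.obj p).G2 (G.X x p i)) :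
    G.push1g α ((G.obj p).D a) = (G.obj q).D (G.push2 α a) := by
  rw [push1g, (G.map α).map_D, CrossedGroupoid.hcast_D]
  rfl

theorem push2_mul (α : Fin (p + 1) →o Fin (q + 1)) {i : Fin (p + 1)}
    (a b : (G.obj p).G2 (G.X x p i)) :
    G.push2 α ((G.obj p).mul a b) = (G.obj q).mul (G.push2 α a) (G.push2 α b) := by
  rw [push2, (G.map α).map2_mul, CrossedGroupoid.cast2_mul]
  rfl

theorem push2_inv2 (α : Fin (p + 1) →o Fin (q + 1)) {i : Fin (p + 1)}
    (a : (G.obj p).G2 (G.X x p i)) :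
    G.push2 α ((G.obj p).inv2 a) = (G.obj q).inv2 (G.push2 α a) := by
  rw [push2, (G.map α).map2_inv2, CrossedGroupoid.cast2_inv2]
  rfl

theorem push2_Ad (α : Fin (p + 1) →o Fin (q + 1)) {i j : Fin (p + 1)}
    (g : (G.obj p).Hom (G.X x₁ p i) (G.X x₂ p j)) (a : (G.obj p).G2 (G.X x₁ p i)) :
    G.push2 α ((G.obj p).Ad g a) = (G.obj q).Ad (G.push1g α g) (G.push2 α a) := by
  rw [push2, (G.map α).map_Ad, CrossedGroupoid.cast2_Ad (G.X_push x₁ α i)]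
  rfl

theorem push2_push2 (β : Fin (q + 1) →o Fin (r + 1)) (α : Fin (p + 1) →o Fin (q + 1))
    {i : Fin (p + 1)} (a : (G.obj p).G2 (G.X x p i)) :
    G.push2 β (G.push2 α a) = G.push2 (β.comp α) a := by
  apply eq_of_heq
  refine (CrossedGroupoid.cast2_heq _ _).trans
    (HEq.trans ?_ (CrossedGroupoid.cast2_heq _ _).symm)
  refine ((G.map β).map2_congr_heq (G.X_push x α i).symm
    (CrossedGroupoid.cast2_heq _ ((G.map α).map2 a))).trans ?_
  exact CrossedGroupoidHom.map2_heq_of_eq (G.map_comp β α).symm a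

theorem push1g_push1g (β : Fin (q + 1) →o Fin (r + 1)) (α : Fin (p + 1) →o Fin (q + 1))
    {i j : Fin (p + 1)} (g : (G.obj p).Hom (G.X x₁ p i) (G.X x₂ p j)) :
    G.push1g β (G.push1g α g) = G.push1g (β.comp α) g := by
  apply eq_of_heq
  refine (CrossedGroupoid.hcast_heq _ _ _).trans
    (HEq.trans ?_ (CrossedGroupoid.hcast_heq _ _ _).symm)
  refine ((G.map β).map1_congr_heq (G.X_push x₁ α i).symm (G.X_push x₂ α j).symm
    (CrossedGroupoid.hcast_heq _ _ ((G.map α).map1 g))).trans ?_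
  exact CrossedGroupoidHom.map1_heq_of_eq (G.map_comp β α).symm g

theorem push1g_vtx (α : Fin (p + 1) →o Fin (q + 1)) (i : Fin (p + 1))
    (f : (G.obj 0).Hom x₁ x₂) :
    G.push1g α ((G.map (vtxMap i)).map1 f) = (G.map (vtxMap (α i))).map1 f :=
  eq_of_heq <| (CrossedGroupoid.hcast_heq _ _ _).trans <|
    CrossedGroupoidHom.map1_heq_of_eq ((G.map_comp α (vtxMap i)).symm.trans
      (congrArg G.map (comp_vtxMap α i))) f

theorem push2_heq_of_eq {α β : Fin (p + 1) →o Fin (q + 1)} (h : α = β) {i : Fin (p + 1)}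
    (a : (G.obj p).G2 (G.X x p i)) : HEq (G.push2 α a) (G.push2 β a) := by
  subst h; rfl

theorem push1g_heq_of_eq {α β : Fin (p + 1) →o Fin (q + 1)} (h : α = β) {i j : Fin (p + 1)}
    (g : (G.obj p).Hom (G.X x₁ p i) (G.X x₂ p j)) : HEq (G.push1g α g) (G.push1g β g) := by
  subst h; rfl

theorem push2_push2_edgeMap (α : Fin (p + 1) →o Fin (q + 1)) {i j : Fin (p + 1)} (h : i ≤ j)
    (a : (G.obj 1).G2 (G.X x 1 0)) :
    G.push2 α (G.push2 (edgeMap i j h) a) = G.push2 (edgeMap (α i) (α j) (α.monotone h)) a := by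
  rw [push2_push2]
  exact eq_of_heq (push2_heq_of_eq (comp_edgeMap α i j h) a)

theorem push1g_push1_edgeMap (α : Fin (p + 1) →o Fin (q + 1)) {i j : Fin (p + 1)} (h : i ≤ j)
    (g : (G.obj 1).Hom (G.X x 1 0) (G.X x 1 1)) :
    G.push1g α (G.push1 (edgeMap i j h) g)
      = G.push1 (edgeMap (α i) (α j) (α.monotone h)) g := by
  rw [push1_eq_push1g, push1g_push1g]
  exact eq_of_heq (push1g_heq_of_eq (comp_edgeMap α i j h) g)

variable {x' : (G.obj 0).Obj}

theorem push2_transportA (α : Fin 3 →o Fin (q + 1)) (f : (G.obj 0).Hom x x')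
    (g : (G.obj 1).Hom (G.X x 1 0) (G.X x 1 1))
    (a : (G.obj 2).G2 (G.X x 2 0)) (c : (G.obj 1).G2 (G.X x 1 0)) :
    G.push2 α (G.transportA f g a c)
      = (G.obj q).Ad ((G.map (vtxMap (α 0))).map1 f)
          ((G.obj q).mul ((G.obj q).mul ((G.obj q).mul
            ((G.obj q).inv2 (G.push2 (edgeMap (α 0) (α 2) (α.monotone (by decide))) c))
            (G.push2 α a))
            ((G.obj q).Ad
              ((G.obj q).inv (G.push1 (edgeMap (α 0) (α 1) (α.monotone (by decide))) g))
              (G.push2 (edgeMap (α 1) (α 2) (α.monotone (by decide))) c)))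
            (G.push2 (edgeMap (α 0) (α 1) (α.monotone (by decide))) c)) := by
  rw [transportA]
  erw [push2_Ad, push1g_vtx, push2_mul, push2_mul, push2_mul, push2_inv2, push2_Ad, push1g_inv,
    push2_push2_edgeMap, push2_push2_edgeMap, push2_push2_edgeMap, push1g_push1_edgeMap]
  rfl

theorem IsDescent.push_defect {g : (G.obj 1).Hom (G.X x 1 0) (G.X x 1 1)}
    {a : (G.obj 2).G2 (G.X x 2 0)} (h : G.IsDescent x g a) (α : Fin 3 →o Fin (q + 1)) :
    (G.obj q).comp ((G.obj q).comp
        ((G.obj q).inv (G.push1 (edgeMap (α 0) (α 2) (α.monotone (by decide))) g))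
        (G.push1 (edgeMap (α 1) (α 2) (α.monotone (by decide))) g))
      (G.push1 (edgeMap (α 0) (α 1) (α.monotone (by decide))) g)
      = (G.obj q).D (G.push2 α a) := by
  have h₁ := congrArg (G.push1g α) h.1
  erw [push1g_comp, push1g_comp, push1g_inv, push1g_D, push1g_push1_edgeMap,
    push1g_push1_edgeMap, push1g_push1_edgeMap] at h₁
  exact h₁

theorem push1_of_gauge (β : Fin 2 →o Fin (q + 1)) {f : (G.obj 0).Hom x x'}
    {g : (G.obj 1).Hom (G.X x 1 0) (G.X x 1 1)} {g' : (G.obj 1).Hom (G.X x' 1 0) (G.X x' 1 1)}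
    {c : (G.obj 1).G2 (G.X x 1 0)}
    (hg' : g' = (G.obj 1).comp ((G.obj 1).comp ((G.obj 1).comp
      ((G.map (vtxMap (1 : Fin 2))).map1 f) g) ((G.obj 1).D c))
      ((G.obj 1).inv ((G.map (vtxMap (0 : Fin 2))).map1 f))) :
    G.push1 β g' = (G.obj q).comp ((G.obj q).comp ((G.obj q).comp
      ((G.map (vtxMap (β 1))).map1 f) (G.push1 β g)) ((G.obj q).D (G.push2 β c)))
      ((G.obj q).inv ((G.map (vtxMap (β 0))).map1 f)) := by
  subst hg'
  erw [push1_eq_push1g, push1g_comp, push1g_comp, push1g_comp, push1g_inv, push1g_D, push1g_vtx,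
    push1g_vtx]
  rfl

end CosimplicialCrossedGroupoid

/-- the twisted 2-cocycle condition holds for the transported
datum (x', g', a') with a' := transportA f g a c. -/
theorem transport_cocycle2 (G : CosimplicialCrossedGroupoid) (P : G.Desc)
    (x' : (G.obj 0).Obj) (g' : (G.obj 1).Hom (G.X x' 1 0) (G.X x' 1 1))
    (f : (G.obj 0).Hom P.x x') (c : (G.obj 1).G2 (G.X P.x 1 0))
    (hpartial : g' = (G.obj 1).comp ((G.obj 1).comp ((G.obj 1).comp
      ((G.map (vtxMap (1 : Fin 2))).map1 f) P.g) ((G.obj 1).D c))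
      ((G.obj 1).inv ((G.map (vtxMap (0 : Fin 2))).map1 f))) :
    (G.obj 3).mul ((G.obj 3).mul
        ((G.obj 3).inv2 (G.push2 (triMap 0 1 3 (by decide) (by decide))
          (G.transportA f P.g P.a c)))
        (G.push2 (triMap 0 2 3 (by decide) (by decide)) (G.transportA f P.g P.a c)))
      (G.push2 (triMap 0 1 2 (by decide) (by decide)) (G.transportA f P.g P.a c))
      = (G.obj 3).Ad ((G.obj 3).inv (G.push1 (edgeMap 0 1 (by decide)) g'))
        (G.push2 (triMap 1 2 3 (by decide) (by decide)) (G.transportA f P.g P.a c)) := by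
  rw [CosimplicialCrossedGroupoid.push1_of_gauge _ hpartial]
  simp only [CosimplicialCrossedGroupoid.push2_transportA]
  -- the vertices `triMap i j k _ _ m` of the faces reduce to numerals, so the edges match up
  exact CrossedGroupoid.twisted_cocycle_of_gauge _ _ _ _ _ _ _ _
    (P.isDescent.push_defect (triMap 0 1 2 (by decide) (by decide))) P.isDescent.2
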